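/- Let H(z,w) ∈ ℂ[z,w] be a homogeneous polynomial of degree m ≥ 2, let ℓ(z,w) = az + bw be a nonzero linear form, and let 1 ≤ k < m. Suppose ℓ^k divides H but ℓ^{k+1} does not. Then ℓ^{2k−2} divides Hess(H) but ℓ^{2k−1} does not, and ℓ^{3k−2} divides Δ_H but ℓ^{3k−1} does not. (For k = 1 the first assertion means that ℓ does not divide Hess(H).) -/

import Mathlib

open MvPolynomial

/-- The Hessian `Hess(H) = H_zz H_ww − H_zw²` of a binary form. -/
noncomputable def hess (H : MvPolynomial (Fin 2) ℂ) : MvPolynomial (Fin 2) ℂ :=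
  pderiv (0 : Fin 2) (pderiv (0 : Fin 2) H) * pderiv (1 : Fin 2) (pderiv (1 : Fin 2) H)
    - (pderiv (1 : Fin 2) (pderiv (0 : Fin 2) H)) ^ 2

/-- `Δ_H = 2 H_z H_w H_zw − H_zz H_w² − H_z² H_ww` of a binary form. -/
noncomputable def deltaH (H : MvPolynomial (Fin 2) ℂ) : MvPolynomial (Fin 2) ℂ :=
  2 * pderiv (0 : Fin 2) H * pderiv (1 : Fin 2) H
      * pderiv (1 : Fin 2) (pderiv (0 : Fin 2) H)
    - pderiv (0 : Fin 2) (pderiv (0 : Fin 2) H) * (pderiv (1 : Fin 2) H) ^ 2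
    - (pderiv (0 : Fin 2) H) ^ 2 * pderiv (1 : Fin 2) (pderiv (1 : Fin 2) H)

/-!
Write `H = ℓ^k G` with `ℓ ∤ G`; taking a homogeneous component, `G` is a form of degree
`n = m - k ≥ 1`. Differentiating, `Hess(H) = ℓ^{2k-2} E` and `Δ_H = ℓ^{3k-2} E'` where, modulo `ℓ`,
`E ≡ k(k-1) G ∂²G - k² (∂G)²` and `E' ≡ k(k+1) G (∂G)² - k² G² ∂²G`, with `∂` the derivative
along the line `ℓ = 0`. Pick a linear form `μ` with `(ℓ, μ)` unimodular; Euler's identity gives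
`μ ∂F ≡ deg F · F (mod ℓ)` for every form `F`, so `μ² E ≡ -k n (n+k-1) G²` and
`μ² E' ≡ k n (n+k) G³`. As `ℓ` is prime and `ℓ ∤ G`, neither `E` nor `E'` is divisible by `ℓ`.
-/

namespace MvPolynomial

theorem pderiv_pderiv_comm {σ R : Type*} [CommRing R] (i j : σ) (p : MvPolynomial σ R) :
    pderiv i (pderiv j p) = pderiv j (pderiv i p) := by
  have h : ⁅pderiv i, pderiv j⁆ = (0 : Derivation R (MvPolynomial σ R) (MvPolynomial σ R)) :=
    derivation_ext fun k => by
      rw [Derivation.commutator_apply]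
      classical simp [pderiv_X, Pi.single_apply, apply_ite]
  rw [← sub_eq_zero, ← Derivation.commutator_apply, h, Derivation.zero_apply]

attribute [local instance] gradedAlgebra in
theorem IsHomogeneous.exists_eq_mul_of_dvd {σ R : Type*} [CommSemiring R]
    {φ p : MvPolynomial σ R} {n i : ℕ} (hφ : φ.IsHomogeneous n) (hp : p.IsHomogeneous i)
    (hin : i ≤ n) (hdvd : p ∣ φ) : ∃ ψ, ψ.IsHomogeneous (n - i) ∧ φ = p * ψ := by
  obtain ⟨ψ, rfl⟩ := hdvd
  refine ⟨homogeneousComponent (n - i) ψ, homogeneousComponent_isHomogeneous _ _, ?_⟩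
  have h := DirectSum.coe_decompose_mul_of_left_mem_of_le (homogeneousSubmodule σ R) (b := ψ) hp hin
  rw [← DirectSum.Decomposition.decompose'_eq] at h
  simp only [decomposition.decompose'_apply] at h
  rw [← h, homogeneousComponent_of_mem hφ, if_pos rfl]

theorem dvd_of_dvd_natCast_mul_pow {σ K : Type*} [Field K] [CharZero K]
    {p G : MvPolynomial σ K} (hp : Prime p) {N j : ℕ} (hN : N ≠ 0)
    (h : p ∣ (N : MvPolynomial σ K) * G ^ j) : p ∣ G := by
  have hu : IsUnit (N : MvPolynomial σ K) := by
    simpa using (isUnit_iff_ne_zero.mpr (Nat.cast_ne_zero.mpr hN : (N : K) ≠ 0)).map C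
  exact hp.dvd_of_dvd_pow (hu.dvd_mul_left.mp h)

end MvPolynomial

theorem pow_dvd_pow_mul_and_not_pow_succ_dvd {α : Type*} [CommMonoidWithZero α]
    [IsCancelMulZero α] {p x : α} (hp : p ≠ 0) (hx : ¬ p ∣ x) (e : ℕ) :
    p ^ e ∣ p ^ e * x ∧ ¬ p ^ (e + 1) ∣ p ^ e * x := by
  rw [pow_succ, mul_dvd_mul_iff_left (pow_ne_zero e hp)]
  exact ⟨dvd_mul_right _ _, hx⟩

namespace BinaryForm

section CommRing

variable {R : Type*} [CommRing R]

noncomputable def linearForm (a b : R) : MvPolynomial (Fin 2) R :=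
  C a * X 0 + C b * X 1

/-- The derivative in the direction `(-b, a)`, i.e. along the line `a z + b w = 0`. -/
noncomputable def dirDeriv (a b : R) (G : MvPolynomial (Fin 2) R) : MvPolynomial (Fin 2) R :=
  C a * pderiv 1 G - C b * pderiv 0 G

theorem isHomogeneous_linearForm (a b : R) : (linearForm a b).IsHomogeneous 1 :=
  (isHomogeneous_C_mul_X a 0).add (isHomogeneous_C_mul_X b 1)

theorem pderiv_zero_linearForm (a b : R) : pderiv 0 (linearForm a b) = C a := by
  simp [linearForm, pderiv_X]

theorem pderiv_one_linearForm (a b : R) : pderiv 1 (linearForm a b) = C b := by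
  simp [linearForm, pderiv_X]

theorem _root_.MvPolynomial.IsHomogeneous.dirDeriv {G : MvPolynomial (Fin 2) R} {n : ℕ}
    (hG : G.IsHomogeneous n) (a b : R) : (dirDeriv a b G).IsHomogeneous (n - 1) :=
  (hG.pderiv.C_mul a).sub (hG.pderiv.C_mul b)

/-- Euler's identity `n G = z G_z + w G_w`, rewritten in the coordinates `linearForm a b`,
`linearForm c d`. -/
theorem linearForm_dvd_mul_dirDeriv_sub {a b c d : R} (hdet : a * d - b * c = 1)
    {G : MvPolynomial (Fin 2) R} {n : ℕ} (hG : G.IsHomogeneous n) :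
    linearForm a b ∣ linearForm c d * dirDeriv a b G - n * G := by
  refine ⟨C c * pderiv 1 G - C d * pderiv 0 G, ?_⟩
  have hdet' : C a * C d - C b * C c = (1 : MvPolynomial (Fin 2) R) := by
    simp only [← C_mul, ← C_sub, hdet, C_1]
  have euler := hG.sum_X_mul_pderiv
  rw [Fin.sum_univ_two, nsmul_eq_mul] at euler
  rw [linearForm, linearForm, dirDeriv]
  linear_combination euler + (X 0 * pderiv 0 G + X 1 * pderiv 1 G) * hdet'

end CommRing

section Field

variable {K : Type*} [Field K] {a b : K}

theorem exists_mul_sub_mul_eq_one (hab : (a, b) ≠ (0, 0)) : ∃ c d : K, a * d - b * c = 1 := by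
  by_cases ha : a = 0
  · have hb : b ≠ 0 := fun hb => hab (by rw [ha, hb])
    exact ⟨-b⁻¹, 0, by field_simp; ring⟩
  · exact ⟨0, a⁻¹, by field_simp; ring⟩

theorem prime_linearForm (hab : (a, b) ≠ (0, 0)) : Prime (linearForm a b) := by
  have hcoeff : ∀ i, coeff (Finsupp.single i 1) (linearForm a b) = ![a, b] i := by
    intro i; fin_cases i <;> simp [linearForm, coeff_X, Finsupp.single_eq_single_iff]
  obtain ⟨i, hi⟩ : ∃ i, ![a, b] i ≠ 0 := by
    by_contra! h; exact hab (by simpa using And.intro (h 0) (h 1))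
  refine Irreducible.prime (irreducible_of_totalDegree_eq_one (le_antisymm ?_ ?_) fun x hx => ?_)
  · refine (totalDegree_add _ _).trans (max_le ?_ ?_) <;>
      exact (totalDegree_mul _ _).trans (by simp)
  · refine le_trans ?_ (le_totalDegree (s := Finsupp.single i 1) ?_)
    · simp
    · rwa [mem_support_iff, hcoeff]
  · refine isUnit_iff_ne_zero.mpr fun hx0 => hi ?_
    simpa [hx0, hcoeff] using hx (Finsupp.single i 1)

theorem exists_mul_mk_dirDeriv (hab : (a, b) ≠ (0, 0)) {G : MvPolynomial (Fin 2) K} {n : ℕ}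
    (hG : G.IsHomogeneous (n + 1)) :
    ∃ μ, μ * Ideal.Quotient.mk (Ideal.span {linearForm a b}) (dirDeriv a b G)
        = (n + 1) * Ideal.Quotient.mk (Ideal.span {linearForm a b}) G ∧
      μ * Ideal.Quotient.mk (Ideal.span {linearForm a b}) (dirDeriv a b (dirDeriv a b G))
        = n * Ideal.Quotient.mk (Ideal.span {linearForm a b}) (dirDeriv a b G) := by
  obtain ⟨c, d, hdet⟩ := exists_mul_sub_mul_eq_one hab
  have h1 := linearForm_dvd_mul_dirDeriv_sub hdet hG
  have h2 := linearForm_dvd_mul_dirDeriv_sub hdet (hG.dirDeriv a b)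
  rw [← Ideal.Quotient.eq_zero_iff_dvd, map_sub, sub_eq_zero] at h1 h2
  refine ⟨Ideal.Quotient.mk _ (linearForm c d), ?_, ?_⟩
  · simpa using h1
  · simpa using h2

variable [CharZero K]

theorem not_dvd_hessCofactor (hab : (a, b) ≠ (0, 0)) {G : MvPolynomial (Fin 2) K} {n : ℕ}
    (hG : G.IsHomogeneous n) (hn : 1 ≤ n) {k : ℕ} (hk : 1 ≤ k) (hLG : ¬ linearForm a b ∣ G) :
    ¬ linearForm a b ∣ (k * (k - 1) : MvPolynomial (Fin 2) K) * G * dirDeriv a b (dirDeriv a b G)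
      - (k ^ 2 : MvPolynomial (Fin 2) K) * dirDeriv a b G ^ 2 := by
  obtain ⟨n, rfl⟩ := Nat.exists_eq_add_of_le' hn
  obtain ⟨μ, h1, h2⟩ := exists_mul_mk_dirDeriv hab hG
  intro hE
  refine hLG (dvd_of_dvd_natCast_mul_pow (prime_linearForm hab)
    (N := k * (n + 1) * (n + k)) (j := 2) (by positivity) ?_)
  rw [← Ideal.Quotient.eq_zero_iff_dvd] at hE ⊢
  simp only [map_sub, map_mul, map_pow, map_natCast, map_one] at hE ⊢
  set π := Ideal.Quotient.mk (Ideal.span {linearForm a b})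
  push_cast
  linear_combination -μ ^ 2 * hE + (k * (k - 1) * π G * μ) * h2
    + (k * (k - 1) * n * π G - k ^ 2 * (μ * π (dirDeriv a b G) + (n + 1) * π G)) * h1

theorem not_dvd_deltaHCofactor (hab : (a, b) ≠ (0, 0)) {G : MvPolynomial (Fin 2) K} {n : ℕ}
    (hG : G.IsHomogeneous n) (hn : 1 ≤ n) {k : ℕ} (hk : 1 ≤ k) (hLG : ¬ linearForm a b ∣ G) :
    ¬ linearForm a b ∣ (k * (k + 1) : MvPolynomial (Fin 2) K) * G * dirDeriv a b G ^ 2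
      - (k ^ 2 : MvPolynomial (Fin 2) K) * G ^ 2 * dirDeriv a b (dirDeriv a b G) := by
  obtain ⟨n, rfl⟩ := Nat.exists_eq_add_of_le' hn
  obtain ⟨μ, h1, h2⟩ := exists_mul_mk_dirDeriv hab hG
  intro hE
  refine hLG (dvd_of_dvd_natCast_mul_pow (prime_linearForm hab)
    (N := k * (n + 1) * (n + 1 + k)) (j := 3) (by positivity) ?_)
  rw [← Ideal.Quotient.eq_zero_iff_dvd] at hE ⊢
  simp only [map_add, map_sub, map_mul, map_pow, map_natCast, map_one] at hE ⊢
  set π := Ideal.Quotient.mk (Ideal.span {linearForm a b})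
  push_cast
  linear_combination μ ^ 2 * hE + (k ^ 2 * π G ^ 2 * μ) * h2
    - (k * (k + 1) * π G * (μ * π (dirDeriv a b G) + (n + 1) * π G) - k ^ 2 * n * π G ^ 2) * h1

end Field

section Complex

variable {L : MvPolynomial (Fin 2) ℂ} {a b : ℂ}

theorem hess_pow_mul (hL0 : pderiv 0 L = C a) (hL1 : pderiv 1 L = C b) {k : ℕ} (hk : 1 ≤ k)
    (G : MvPolynomial (Fin 2) ℂ) :
    ∃ T, hess (L ^ k * G) = L ^ (2 * k - 2) * ((k * (k - 1) : MvPolynomial (Fin 2) ℂ) * G *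
      dirDeriv a b (dirDeriv a b G) - (k ^ 2 : MvPolynomial (Fin 2) ℂ) * dirDeriv a b G ^ 2
      + L * T) := by
  refine ⟨2 * (k : MvPolynomial (Fin 2) ℂ) * (C a * (pderiv 0 G * pderiv 1 (pderiv 1 G)
    - pderiv 1 G * pderiv 1 (pderiv 0 G)) + C b * (pderiv 1 G * pderiv 0 (pderiv 0 G)
    - pderiv 0 G * pderiv 1 (pderiv 0 G))) + L * hess G, ?_⟩
  obtain ⟨j, rfl⟩ := Nat.exists_eq_add_of_le' hk
  rcases j with _ | i
  on_goal 2 => rw [show 2 * (i + 1 + 1) - 2 = 2 * i + 2 by omega]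
  all_goals
    simp only [hess, dirDeriv, zero_add, pow_one, pderiv_mul, pderiv_pow,
      add_tsub_cancel_right, Derivation.map_natCast, hL0, hL1, pderiv_C, map_sub, map_add]
    rw [pderiv_pderiv_comm 0 1]
    push_cast
    ring

theorem deltaH_pow_mul (hL0 : pderiv 0 L = C a) (hL1 : pderiv 1 L = C b) {k : ℕ} (hk : 1 ≤ k)
    (G : MvPolynomial (Fin 2) ℂ) :
    ∃ T, deltaH (L ^ k * G) = L ^ (3 * k - 2) * ((k * (k + 1) : MvPolynomial (Fin 2) ℂ) * G *
      dirDeriv a b G ^ 2 - (k ^ 2 : MvPolynomial (Fin 2) ℂ) * G ^ 2 * dirDeriv a b (dirDeriv a b G)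
      + L * T) := by
  refine ⟨-(G * (2 * (k : MvPolynomial (Fin 2) ℂ) * (C a * (pderiv 0 G * pderiv 1 (pderiv 1 G)
    - pderiv 1 G * pderiv 1 (pderiv 0 G)) + C b * (pderiv 1 G * pderiv 0 (pderiv 0 G)
    - pderiv 0 G * pderiv 1 (pderiv 0 G))))) + L * deltaH G, ?_⟩
  obtain ⟨j, rfl⟩ := Nat.exists_eq_add_of_le' hk
  rcases j with _ | i
  on_goal 2 => rw [show 3 * (i + 1 + 1) - 2 = 3 * i + 4 by omega]
  all_goals
    simp only [deltaH, dirDeriv, zero_add, pow_one, pderiv_mul, pderiv_pow,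
      add_tsub_cancel_right, Derivation.map_natCast, hL0, hL1, pderiv_C, map_sub, map_add]
    rw [pderiv_pderiv_comm 0 1]
    push_cast
    ring

end Complex

end BinaryForm

open BinaryForm

theorem stmt7_general (m : ℕ) (H : MvPolynomial (Fin 2) ℂ)
    (hH : H.IsHomogeneous m) (a b : ℂ) (hab : (a, b) ≠ (0, 0))
    (L : MvPolynomial (Fin 2) ℂ)
    (hL : L = C a * X (0 : Fin 2) + C b * X (1 : Fin 2))
    (k : ℕ) (hk1 : 1 ≤ k) (hkm : k < m)
    (hdvd : L ^ k ∣ H) (hndvd : ¬ L ^ (k + 1) ∣ H) :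
    (L ^ (2 * k - 2) ∣ hess H ∧ ¬ L ^ (2 * k - 1) ∣ hess H) ∧
    (L ^ (3 * k - 2) ∣ deltaH H ∧ ¬ L ^ (3 * k - 1) ∣ deltaH H) := by
  obtain rfl : L = linearForm a b := hL
  obtain ⟨G, hG, rfl⟩ := hH.exists_eq_mul_of_dvd ((isHomogeneous_linearForm a b).pow k)
    (by omega) hdvd
  have hLG : ¬ linearForm a b ∣ G := fun h => hndvd (by rw [pow_succ]; exact mul_dvd_mul_left _ h)
  have hL0 := (prime_linearForm hab).ne_zero
  obtain ⟨T, hT⟩ := hess_pow_mul (pderiv_zero_linearForm a b) (pderiv_one_linearForm a b) hk1 G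
  obtain ⟨T', hT'⟩ := deltaH_pow_mul (pderiv_zero_linearForm a b) (pderiv_one_linearForm a b) hk1 G
  rw [hT, hT', show 2 * k - 1 = 2 * k - 2 + 1 by omega, show 3 * k - 1 = 3 * k - 2 + 1 by omega]
  exact ⟨pow_dvd_pow_mul_and_not_pow_succ_dvd hL0 ((dvd_add_left (dvd_mul_right _ T)).not.mpr
      (not_dvd_hessCofactor hab hG (by omega) hk1 hLG)) _,
    pow_dvd_pow_mul_and_not_pow_succ_dvd hL0 ((dvd_add_left (dvd_mul_right _ T')).not.mpr
      (not_dvd_deltaHCofactor hab hG (by omega) hk1 hLG)) _⟩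

/-- let `H` be a binary form of degree `m ≥ 2`, `ℓ = az + bw` a
nonzero linear form, `1 ≤ k < m`, and suppose `ℓ^k ∣ H` but `ℓ^{k+1} ∤ H`.
Then `ℓ^{2k−2} ∣ Hess(H)` but `ℓ^{2k−1} ∤ Hess(H)`, and `ℓ^{3k−2} ∣ Δ_H` but
`ℓ^{3k−1} ∤ Δ_H`. -/
theorem stmt7 (m : ℕ) (hm : 2 ≤ m) (H : MvPolynomial (Fin 2) ℂ)
    (hH : H.IsHomogeneous m) (a b : ℂ) (hab : (a, b) ≠ (0, 0))
    (L : MvPolynomial (Fin 2) ℂ)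
    (hL : L = C a * X (0 : Fin 2) + C b * X (1 : Fin 2))
    (k : ℕ) (hk1 : 1 ≤ k) (hkm : k < m)
    (hdvd : L ^ k ∣ H) (hndvd : ¬ L ^ (k + 1) ∣ H) :
    (L ^ (2 * k - 2) ∣ hess H ∧ ¬ L ^ (2 * k - 1) ∣ hess H) ∧
    (L ^ (3 * k - 2) ∣ deltaH H ∧ ¬ L ^ (3 * k - 1) ∣ deltaH H) :=
  stmt7_general m H hH a b hab L hL k hk1 hkm hdvd hndvd
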